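/- arXiv:1808.08067 — 8 statements merged into one kernel-verified Lean document; each statement's English description precedes it below -/
import Mathlib

section
/- If a hypergraph E on vertex set V = ⋃E has no minimal cover, then for any edge F ∈ E, the hypergraph {E \ F : E ∈ E} on vertex set V \ F has no minimal cover either. -/
/-- `C` is a cover of the hypergraph `E`. -/
def IsCover {α : Type*} (E C : Set (Set α)) : Prop :=
  C ⊆ E ∧ ⋃₀ C = ⋃₀ E

/-- `C` is a minimal cover of the hypergraph `E`. -/
def IsMinimalCover {α : Type*} (E C : Set (Set α)) : Prop :=
  IsCover E C ∧ ∀ D ⊆ C, IsCover E D → D = C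

/-- `S` is a subhypergraph of `E`. -/
def IsSubhypergraph {α : Type*} (E S : Set (Set α)) : Prop :=
  ∃ F ⊆ E, ∃ A ⊆ ⋃₀ F, S = (fun T => T ∩ A) '' F

/-- `S` has a maximal edge. -/
def HasMaximalEdge {α : Type*} (S : Set (Set α)) : Prop :=
  ∃ M ∈ S, ∀ T ∈ S, M ⊆ T → T = M

/-- `S` is isomorphic to the hypergraph ω, whose vertex set is ℕ and whose
edges are the initial segments `{0, …, n-1}` for `n : ℕ`. -/
def IsoToOmega {α : Type*} (S : Set (Set α)) : Prop :=
  ∃ f : ℕ → α, Function.Injective f ∧ Set.range f = ⋃₀ S ∧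
    S = {T | ∃ n : ℕ, T = f '' Set.Iio n}

theorem stmt_1 {α : Type*} (E : Set (Set α))
    (h : ¬ ∃ C, IsMinimalCover E C) (F : Set α) (hF : F ∈ E) :
    ¬ ∃ C, IsMinimalCover ((fun S => S \ F) '' E) C := by
  rintro ⟨C', ⟨⟨hC'sub, hC'un⟩, hC'min⟩⟩
  apply h
  have hE' : ⋃₀ ((fun S => S \ F) '' E) = ⋃₀ E \ F := by
    ext v
    simp only [Set.mem_sUnion, Set.mem_image, Set.mem_diff]
    constructor
    · rintro ⟨_, ⟨S, hS, rfl⟩, hv⟩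
      exact ⟨⟨S, hS, hv.1⟩, hv.2⟩
    · rintro ⟨⟨S, hS, hv⟩, hvF⟩
      exact ⟨S \ F, ⟨S, hS, rfl⟩, hv, hvF⟩
  have hchoice : ∀ S' ∈ C', ∃ S ∈ E, S \ F = S' := fun S' hS' => hC'sub hS'
  choose! g hgE hgF using hchoice
  have himg : g '' C' ⊆ E := by rintro T ⟨S', hS', rfl⟩; exact hgE S' hS'
  have hcov : ∀ v ∈ ⋃₀ E, v ∉ F → ∃ S' ∈ C', v ∈ g S' := by
    intro v hv hvF
    have hmem : v ∈ ⋃₀ C' := by rw [hC'un, hE']; exact ⟨hv, hvF⟩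
    obtain ⟨S', hS', hvS'⟩ := hmem
    refine ⟨S', hS', ?_⟩
    rw [← hgF S' hS'] at hvS'
    exact hvS'.1
  have hcrit : ∀ S' ∈ C', ∃ v ∈ ⋃₀ E, v ∉ F ∧ v ∈ S' ∧
      ∀ S'' ∈ C', v ∈ S'' → S'' = S' := by
    intro S' hS'
    have hne : C' \ {S'} ≠ C' := by
      intro heq
      have hmem : S' ∈ C' \ {S'} := by rw [heq]; exact hS'
      exact hmem.2 rfl
    have hnotcov : ¬ IsCover ((fun S => S \ F) '' E) (C' \ {S'}) := fun hc =>
      hne (hC'min _ Set.diff_subset hc)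
    have hsub : C' \ {S'} ⊆ (fun S => S \ F) '' E := fun T hT => hC'sub hT.1
    have hU : ⋃₀ (C' \ {S'}) ≠ ⋃₀ ((fun S => S \ F) '' E) := fun he => hnotcov ⟨hsub, he⟩
    have hss : ⋃₀ (C' \ {S'}) ⊆ ⋃₀ ((fun S => S \ F) '' E) := by
      rw [← hC'un]
      exact Set.sUnion_subset_sUnion Set.diff_subset
    obtain ⟨v, hv1, hv2⟩ := Set.exists_of_ssubset (hss.ssubset_of_ne hU)
    rw [hE'] at hv1
    refine ⟨v, hv1.1, hv1.2, ?_, ?_⟩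
    · have hmem : v ∈ ⋃₀ C' := by rw [hC'un, hE']; exact hv1
      obtain ⟨T, hT, hvT⟩ := hmem
      by_cases hTS : T = S'
      · exact hTS ▸ hvT
      · exact absurd ⟨T, ⟨hT, hTS⟩, hvT⟩ hv2
    · intro S'' hS'' hvS''
      by_contra hne'
      exact hv2 ⟨S'', ⟨hS'', hne'⟩, hvS''⟩
  by_cases hcase : F ⊆ ⋃₀ (g '' C')
  · refine ⟨g '' C', ⟨⟨himg, ?_⟩, ?_⟩⟩
    · apply Set.Subset.antisymm (Set.sUnion_subset_sUnion himg)
      rintro v ⟨S, hS, hvS⟩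
      by_cases hvF : v ∈ F
      · exact hcase hvF
      · obtain ⟨S', hS', hv⟩ := hcov v ⟨S, hS, hvS⟩ hvF
        exact ⟨g S', ⟨S', hS', rfl⟩, hv⟩
    · intro D hD ⟨hDE, hDun⟩
      refine Set.Subset.antisymm hD ?_
      rintro T ⟨S', hS', rfl⟩
      obtain ⟨v, hv, hvF, hvS', hvuniq⟩ := hcrit S' hS'
      have hvD : v ∈ ⋃₀ D := by rw [hDun]; exact hv
      obtain ⟨T', hT'D, hvT'⟩ := hvD
      obtain ⟨S'', hS'', rfl⟩ := hD hT'D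
      have hvS'' : v ∈ S'' := by
        rw [← hgF S'' hS'']
        exact ⟨hvT', hvF⟩
      rw [← hvuniq S'' hS'' hvS'']
      exact hT'D
  · refine ⟨insert F (g '' C'), ⟨⟨?_, ?_⟩, ?_⟩⟩
    · rintro T hT
      rcases hT with rfl | hT
      · exact hF
      · exact himg hT
    · apply Set.Subset.antisymm
      · apply Set.sUnion_subset
        rintro T hT
        rcases hT with rfl | hT
        · exact Set.subset_sUnion_of_mem hF
        · exact Set.subset_sUnion_of_mem (himg hT)
      · rintro v hv
        by_cases hvF : v ∈ F
        · exact ⟨F, Set.mem_insert _ _, hvF⟩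
        · obtain ⟨S', hS', hvg⟩ := hcov v hv hvF
          exact ⟨g S', Set.mem_insert_of_mem _ ⟨S', hS', rfl⟩, hvg⟩
    · intro D hD ⟨hDE, hDun⟩
      refine Set.Subset.antisymm hD ?_
      rintro T hT
      rcases hT with hTF | ⟨S', hS', rfl⟩
      · rw [hTF]
        obtain ⟨w, hwF, hwn⟩ := Set.not_subset.mp hcase
        have hwE : w ∈ ⋃₀ E := ⟨F, hF, hwF⟩
        have hwD : w ∈ ⋃₀ D := by rw [hDun]; exact hwE
        obtain ⟨T', hT'D, hwT'⟩ := hwD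
        rcases hD hT'D with heq | hT'
        · exact heq ▸ hT'D
        · exact absurd ⟨T', hT', hwT'⟩ hwn
      · obtain ⟨v, hv, hvF, hvS', hvuniq⟩ := hcrit S' hS'
        have hvD : v ∈ ⋃₀ D := by rw [hDun]; exact hv
        obtain ⟨T', hT'D, hvT'⟩ := hvD
        rcases hD hT'D with heq | ⟨S'', hS'', hgeq⟩
        · exact absurd (heq ▸ hvT') hvF
        · have hvS'' : v ∈ S'' := by
            rw [← hgF S'' hS'']
            exact ⟨hgeq ▸ hvT', hvF⟩
          rw [← hvuniq S'' hS'' hvS'', hgeq]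
          exact hT'D
end

section
/- For a hypergraph E, the following are equivalent: (1) every countable subhypergraph of E has a minimal cover; (2) every non-empty subhypergraph of E has a maximal edge; (3) no subhypergraph of E is isomorphic to the hypergraph ω. -/
/-!
A sequence of edges `g l` and vertices `x j` with `x j ∈ g l ↔ j < l` traces a copy of ω on the
vertices `x j`. Such a pattern arises from a strictly increasing chain of edges, and also from a
sequence of vertices whose sets of incident edges strictly decrease. So in an ω-free hypergraph
both orders are well founded: the first yields maximal edges. The second yields a minimal cover
of a countable ω-free hypergraph: go through the vertices one by one, and to cover a vertex `w`
choose a vertex `y` whose set of incident edges is minimal among those contained in the set of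
edges through `w`, keep one edge `e` through `y` and discard all other edges through `y`.
Minimality of `y` ensures that the remaining edges still cover, and `y` stays a private vertex
of `e` for the rest of the construction. Conversely, ω itself has neither a maximal edge nor a
minimal cover.
-/

section

open Set

variable {α β : Type*} {E S K C F : Set (Set α)}

theorem IsSubhypergraph.trans {T : Set (Set α)} (hS : IsSubhypergraph E S)
    (hT : IsSubhypergraph S T) : IsSubhypergraph E T := by
  obtain ⟨F, hFE, A, -, rfl⟩ := hS
  obtain ⟨G, hG, B, hB, rfl⟩ := hT
  have hBA : B ⊆ A := fun z hz => by
    obtain ⟨_, hg, hzg⟩ := hB hz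
    obtain ⟨U, -, rfl⟩ := hG hg
    exact hzg.2
  refine ⟨{U ∈ F | U ∩ A ∈ G}, fun U hU => hFE hU.1, B, fun z hz => ?_, ?_⟩
  · obtain ⟨_, hg, hzg⟩ := hB hz
    obtain ⟨U, hU, rfl⟩ := hG hg
    exact ⟨U, ⟨hU, hg⟩, hzg.1⟩
  · ext V
    constructor
    · rintro ⟨_, hg, rfl⟩
      obtain ⟨U, hU, rfl⟩ := hG hg
      exact ⟨U, ⟨hU, hg⟩, show U ∩ B = U ∩ A ∩ B by rw [inter_assoc, inter_eq_right.2 hBA]⟩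
    · rintro ⟨U, ⟨-, hg⟩, rfl⟩
      exact ⟨U ∩ A, hg, show U ∩ A ∩ B = U ∩ B by rw [inter_assoc, inter_eq_right.2 hBA]⟩

theorem isSubhypergraph_of_subset (h : K ⊆ S) : IsSubhypergraph S K :=
  ⟨K, h, ⋃₀ K, subset_rfl, by
    rw [image_congr fun U hU => inter_eq_left.2 (subset_sUnion_of_mem hU), image_id']⟩

def IsOmegaFree (E : Set (Set α)) : Prop :=
  ∀ S, IsSubhypergraph E S → ¬ IsoToOmega S

theorem IsOmegaFree.subhypergraph (hE : IsOmegaFree E) (hS : IsSubhypergraph E S) :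
    IsOmegaFree S :=
  fun T hT => hE T (hS.trans hT)

theorem IsOmegaFree.subset (hS : IsOmegaFree S) (h : K ⊆ S) : IsOmegaFree K :=
  hS.subhypergraph (isSubhypergraph_of_subset h)

theorem IsOmegaFree.not_forall_mem_iff_lt (hE : IsOmegaFree E) {g : ℕ → Set α}
    (hg : ∀ l, g l ∈ E) (x : ℕ → α) : ¬ ∀ j l, x j ∈ g l ↔ j < l := by
  intro hx
  have hinj : Function.Injective x := fun a b hab => by
    have hba := (hx b (a + 1)).1 (hab ▸ (hx a (a + 1)).2 a.lt_succ_self)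
    have hab' := (hx a (b + 1)).1 (hab.symm ▸ (hx b (b + 1)).2 b.lt_succ_self)
    omega
  have htrace : ∀ l, g l ∩ range x = x '' Iio l := fun l => by
    ext z
    constructor
    · rintro ⟨hz, j, rfl⟩
      exact ⟨j, (hx j l).1 hz, rfl⟩
    · rintro ⟨j, hj, rfl⟩
      exact ⟨(hx j l).2 hj, j, rfl⟩
  refine hE {T | ∃ n, T = x '' Iio n} ⟨range g, range_subset_iff.2 hg, range x, ?_, ?_⟩
    ⟨x, hinj, ?_, rfl⟩
  · rintro _ ⟨j, rfl⟩
    exact ⟨g (j + 1), mem_range_self _, (hx j (j + 1)).2 j.lt_succ_self⟩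
  · ext T
    simp only [← range_comp, Function.comp_def, htrace, mem_range, eq_comm]
    rfl
  · ext z
    simp only [mem_range, mem_sUnion, mem_ofPred_eq, ↓existsAndEq, mem_image, mem_Iio, true_and]
    exact ⟨fun ⟨j, hj⟩ => ⟨j + 1, j, j.lt_succ_self, hj⟩, fun ⟨_, j, _, hj⟩ => ⟨j, hj⟩⟩

theorem exists_mem_iff_lt_of_strictMono {t : ℕ → Set β} (ht : StrictMono t) :
    ∃ x : ℕ → β, ∀ k n, x k ∈ t n ↔ k < n := by
  choose x hx using fun k : ℕ => exists_of_ssubset (ht k.lt_succ_self)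
  refine ⟨x, fun k n => ⟨fun h => ?_, fun h => ht.monotone h (hx k).1⟩⟩
  by_contra! hnk
  exact (hx k).2 (ht.monotone hnk h)

theorem IsOmegaFree.hasMaximalEdge (hS : IsOmegaFree S) (hne : S.Nonempty) :
    HasMaximalEdge S := by
  have hwf : WellFounded fun a b : S => (b : Set α) ⊂ a := by
    refine wellFounded_iff_isEmpty_descending_chain.2 ⟨fun ⟨t, ht⟩ => ?_⟩
    obtain ⟨x, hx⟩ := exists_mem_iff_lt_of_strictMono
      (strictMono_nat_of_lt_succ fun n => (ht n : (t n : Set α) ⊂ t (n + 1)))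
    exact hS.not_forall_mem_iff_lt (fun n => (t n).2) x hx
  obtain ⟨⟨M, hM⟩, -, hmax⟩ := hwf.has_min univ ⟨⟨_, hne.some_mem⟩, trivial⟩
  exact ⟨M, hM, fun T hT hMT =>
    ((Set.eq_or_ssubset_of_subset hMT).resolve_right (hmax ⟨T, hT⟩ trivial)).symm⟩

def incidentEdges (S : Set (Set α)) (x : α) : Set (Set α) :=
  {r ∈ S | x ∈ r}

theorem IsOmegaFree.wellFounded_incidentEdges (hS : IsOmegaFree S) :
    WellFounded fun z y : α => incidentEdges S z ⊂ incidentEdges S y := by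
  refine wellFounded_iff_isEmpty_descending_chain.2 ⟨fun ⟨y, hy⟩ => ?_⟩
  have hanti : Antitone fun n => incidentEdges S (y n) :=
    antitone_nat_of_succ_le fun n => (hy n).subset
  choose e he hne using fun n => exists_of_ssubset (hy n)
  refine hS.not_forall_mem_iff_lt (fun n => (he n).1) (fun j => y (j + 1)) fun j l =>
    ⟨fun h => ?_, fun h => (hanti h (he l)).2⟩
  by_contra! hlj
  exact hne l (hanti (Nat.succ_le_succ hlj) ⟨(he l).1, h⟩)

theorem IsOmegaFree.exists_pivot (hS : IsOmegaFree S) {w : α} (hw : w ∈ ⋃₀ S) :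
    ∃ e ∈ S, ∃ y ∈ e, (∀ r ∈ S, y ∈ r → w ∈ r) ∧ ⋃₀ S ⊆ e ∪ ⋃₀ {r ∈ S | y ∉ r} := by
  obtain ⟨y, ⟨⟨e, he, hye⟩, hyw⟩, hmin⟩ := hS.wellFounded_incidentEdges.has_min
    {y | y ∈ ⋃₀ S ∧ incidentEdges S y ⊆ incidentEdges S w} ⟨w, hw, subset_rfl⟩
  refine ⟨e, he, y, hye, fun r hr hyr => (hyw ⟨hr, hyr⟩).2, ?_⟩
  rintro z ⟨r, hr, hzr⟩
  by_contra hz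
  have hzy : incidentEdges S z ⊆ incidentEdges S y := fun r' ⟨hr', hzr'⟩ =>
    ⟨hr', by_contra fun hyr' => hz (Or.inr ⟨r', ⟨hr', hyr'⟩, hzr'⟩)⟩
  exact hmin z ⟨⟨r, hr, hzr⟩, hzy.trans hyw⟩
    ((ssubset_iff_of_subset hzy).2 ⟨e, ⟨he, hye⟩, fun hze => hz (Or.inl hze.2)⟩)

def HasPrivateVertex (K : Set (Set α)) (f : Set α) : Prop :=
  ∃ p ∈ f, ∀ s ∈ K, p ∈ s → s = f

theorem HasPrivateVertex.mono {f : Set α} (h : HasPrivateVertex K f) (hK : C ⊆ K) :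
    HasPrivateVertex C f :=
  let ⟨p, hp, hpriv⟩ := h
  ⟨p, hp, fun s hs => hpriv s (hK hs)⟩

theorem IsCover.isMinimalCover (hC : IsCover S C) (hpriv : ∀ c ∈ C, HasPrivateVertex C c) :
    IsMinimalCover S C := by
  refine ⟨hC, fun D hDC hD => hDC.antisymm fun c hc => ?_⟩
  obtain ⟨p, hpc, hp⟩ := hpriv c hc
  obtain ⟨d, hd, hpd⟩ : p ∈ ⋃₀ D := hD.2 ▸ hC.2 ▸ subset_sUnion_of_mem hc hpc
  exact hp d (hDC hd) hpd ▸ hd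

/-- An intermediate stage of the construction of a minimal cover: the edges of `F` are kept for
good, while those of `K \ F` may still be discarded. -/
structure CoverStage (S F K : Set (Set α)) : Prop where
  subset_cover : F ⊆ K
  isCover : IsCover S K
  hasPrivateVertex : ∀ f ∈ F, HasPrivateVertex K f

theorem CoverStage.exists_step (hS : IsOmegaFree S) (h : CoverStage S F K) (w : α) :
    ∃ F' K', CoverStage S F' K' ∧ F ⊆ F' ∧ K' ⊆ K ∧ (w ∈ ⋃₀ S → w ∈ ⋃₀ F') := by
  by_cases hw : w ∈ ⋃₀ S ∧ w ∉ ⋃₀ F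
  swap
  · exact ⟨F, K, h, subset_rfl, subset_rfl, fun hwS => not_not.1 fun hwF => hw ⟨hwS, hwF⟩⟩
  obtain ⟨hwS, hwF⟩ := hw
  obtain ⟨e, he, y, hye, hyw, hcov⟩ :=
    (hS.subset h.isCover.1).exists_pivot (h.isCover.2 ▸ hwS)
  have hK' : insert e {r ∈ K | y ∉ r} ⊆ K := insert_subset he (sep_subset _ _)
  refine ⟨insert e F, insert e {r ∈ K | y ∉ r}, ⟨?_, ⟨hK'.trans h.isCover.1, ?_⟩, ?_⟩,
    subset_insert _ _, hK', fun _ => ⟨e, mem_insert _ _, hyw e he hye⟩⟩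
  · exact insert_subset_insert fun f hf =>
      ⟨h.subset_cover hf, fun hyf => hwF ⟨f, hf, hyw f (h.subset_cover hf) hyf⟩⟩
  · rw [← h.isCover.2]
    exact (sUnion_mono hK').antisymm (sUnion_insert e _ ▸ hcov)
  · rintro f (rfl | hf)
    · exact ⟨y, hye, fun s hs hys => (mem_insert_iff.1 hs).resolve_right fun hs' => hs'.2 hys⟩
    · exact (h.hasPrivateVertex f hf).mono hK'

theorem isMinimalCover_iUnion {F K : ℕ → Set (Set α)} (hF : Monotone F) (hK : Antitone K)
    (h : ∀ n, CoverStage S (F n) (K n)) (hcov : ⋃₀ S ⊆ ⋃₀ ⋃ n, F n) :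
    IsMinimalCover S (⋃ n, F n) := by
  have hFK : ∀ m, ⋃ n, F n ⊆ K m := fun m => iUnion_subset fun k =>
    (hF (le_max_left k m)).trans ((h _).subset_cover.trans (hK (le_max_right k m)))
  refine IsCover.isMinimalCover ⟨(hFK 0).trans (h 0).isCover.1, ?_⟩ fun c hc => ?_
  · exact (sUnion_mono ((hFK 0).trans (h 0).isCover.1)).antisymm hcov
  · obtain ⟨m, hm⟩ := mem_iUnion.1 hc
    exact ((h m).hasPrivateVertex c hm).mono (hFK m)

theorem IsOmegaFree.exists_isMinimalCover (hS : IsOmegaFree S) (hV : (⋃₀ S).Countable) :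
    ∃ C, IsMinimalCover S C := by
  rcases (⋃₀ S).eq_empty_or_nonempty with hV₀ | ⟨a, -⟩
  · exact ⟨∅, IsCover.isMinimalCover ⟨empty_subset S, by rw [sUnion_empty, hV₀]⟩ (by simp)⟩
  have : Nonempty α := ⟨a⟩
  obtain ⟨v, hv⟩ := countable_iff_exists_subset_range.1 hV
  choose! F' K' hstage hF hK hcov using
    fun n F K (h : CoverStage S F K) => h.exists_step hS (v n)
  let stage : ℕ → Set (Set α) × Set (Set α) :=
    fun n => Nat.rec (∅, S) (fun n P => (F' n P.1 P.2, K' n P.1 P.2)) n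
  have h : ∀ n, CoverStage S (stage n).1 (stage n).2 := fun n =>
    Nat.rec ⟨empty_subset S, ⟨subset_rfl, rfl⟩, fun _ hf => (notMem_empty _ hf).elim⟩
      (fun n ih => hstage n _ _ ih) n
  refine ⟨_, isMinimalCover_iUnion (monotone_nat_of_le_succ fun n => hF n _ _ (h n))
    (antitone_nat_of_succ_le fun n => hK n _ _ (h n)) h ?_⟩
  intro z hz
  obtain ⟨n, rfl⟩ := hv hz
  exact sUnion_mono (subset_iUnion (fun n => (stage n).1) (n + 1)) (hcov n _ _ (h n) hz)

theorem IsoToOmega.nonempty (h : IsoToOmega S) : S.Nonempty := by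
  obtain ⟨f, -, -, rfl⟩ := h
  exact ⟨_, 0, rfl⟩

theorem IsoToOmega.countable (h : IsoToOmega S) : S.Countable := by
  obtain ⟨f, -, -, rfl⟩ := h
  refine (countable_range fun n => f '' Iio n).mono ?_
  rintro _ ⟨n, rfl⟩
  exact mem_range_self n

theorem IsoToOmega.countable_sUnion (h : IsoToOmega S) : (⋃₀ S).Countable := by
  obtain ⟨f, -, hf, -⟩ := h
  exact hf ▸ countable_range f

theorem IsoToOmega.not_hasMaximalEdge (h : IsoToOmega S) : ¬ HasMaximalEdge S := by
  obtain ⟨f, hf, -, rfl⟩ := h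
  rintro ⟨_, ⟨n, rfl⟩, hmax⟩
  have hn : f n ∈ f '' Iio (n + 1) := mem_image_of_mem f n.lt_succ_self
  rw [hmax _ ⟨n + 1, rfl⟩ (image_mono (Iio_subset_Iio n.le_succ)), hf.mem_set_image] at hn
  exact lt_irrefl n hn

theorem IsoToOmega.not_isMinimalCover (h : IsoToOmega S) : ¬ IsMinimalCover S C := by
  obtain ⟨f, hf, hrange, rfl⟩ := h
  rintro ⟨⟨hCS, hCcov⟩, hmin⟩
  have hbig : ∀ k, ∃ n, k < n ∧ f '' Iio n ∈ C := fun k => by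
    obtain ⟨c, hc, hkc⟩ : f k ∈ ⋃₀ C := hCcov ▸ hrange ▸ mem_range_self k
    obtain ⟨n, rfl⟩ := hCS hc
    exact ⟨n, (hf.mem_set_image (s := Iio n)).1 hkc, hc⟩
  obtain ⟨m, -, hm⟩ := hbig 0
  suffices hcov : IsCover _ (C \ {f '' Iio m}) by
    rw [← hmin _ sdiff_subset hcov] at hm
    exact hm.2 rfl
  refine ⟨sdiff_subset.trans hCS, (sUnion_mono sdiff_subset).trans hCcov.le |>.antisymm ?_⟩
  rw [← hrange]
  rintro _ ⟨k, rfl⟩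
  obtain ⟨n, hn, hnC⟩ := hbig (max k m)
  refine ⟨f '' Iio n, ⟨hnC, fun hnm => ?_⟩,
    mem_image_of_mem f (lt_of_le_of_lt (le_max_left _ _) hn)⟩
  have hmn : f m ∈ f '' Iio n := mem_image_of_mem f (lt_of_le_of_lt (le_max_right _ _) hn)
  rw [mem_singleton_iff.1 hnm, hf.mem_set_image] at hmn
  exact lt_irrefl m hmn

end

theorem stmt_4 {α : Type*} (E : Set (Set α)) :
    List.TFAE
      [ (∀ S, IsSubhypergraph E S → S.Countable → (⋃₀ S).Countable →
          ∃ C, IsMinimalCover S C),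
        (∀ S, IsSubhypergraph E S → S.Nonempty → HasMaximalEdge S),
        (∀ S, IsSubhypergraph E S → ¬ IsoToOmega S) ] := by
  tfae_have 1 → 3 := fun h1 S hS hω =>
    let ⟨_, hC⟩ := h1 S hS hω.countable hω.countable_sUnion
    hω.not_isMinimalCover hC
  tfae_have 3 → 2 := fun h3 S hS hne => (IsOmegaFree.subhypergraph h3 hS).hasMaximalEdge hne
  tfae_have 2 → 3 := fun h2 S hS hω => hω.not_hasMaximalEdge (h2 S hS hω.nonempty)
  tfae_have 3 → 1 := fun h3 S hS _ hV => (IsOmegaFree.subhypergraph h3 hS).exists_isMinimalCover hV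
  tfae_finish
end

section
/- If a hypergraph E is such that for every vertex v ∈ ⋃E the family E_v := {S ∈ E : v ∈ S} is finite, then E has a minimal cover. -/
/-! By Zorn's lemma it suffices that the intersection of a nonempty chain of covers is again a
cover. A vertex `v` lies in only finitely many edges, so the traces `C ∩ E_v` of the covers `C`
in the chain range over finitely many nonempty sets; the least of them is contained in every
member of the chain, and any of its edges covers `v` in the intersection. -/

theorem IsChain.sInter_inter_nonempty {β : Type*} {c : Set (Set β)} {F : Set β}
    (hc : IsChain (· ⊆ ·) c) (hc₀ : c.Nonempty) (hF : F.Finite)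
    (hmeet : ∀ C ∈ c, (C ∩ F).Nonempty) : (⋂₀ c ∩ F).Nonempty := by
  have htraces : ((· ∩ F) '' c).Finite :=
    hF.finite_subsets.subset (by rintro _ ⟨C, -, rfl⟩; exact Set.inter_subset_right)
  obtain ⟨Cm, hCm, hmin⟩ := Set.Finite.exists_minimalFor' (· ∩ F) c htraces hc₀
  have hleast : ∀ C ∈ c, Cm ∩ F ⊆ C := by
    intro C hC
    rcases hc.total hCm hC with hle | hle
    · exact Set.inter_subset_left.trans hle
    · exact (hmin hC (Set.inter_subset_inter_left _ hle)).trans Set.inter_subset_left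
  obtain ⟨x, hx⟩ := hmeet Cm hCm
  exact ⟨x, fun C hC => hleast C hC hx, hx.2⟩

theorem isCover_sInter_of_isChain {α : Type*} {E : Set (Set α)}
    (h : ∀ v ∈ ⋃₀ E, {S ∈ E | v ∈ S}.Finite) {c : Set (Set (Set α))}
    (hc : IsChain (· ⊆ ·) c) (hc₀ : c.Nonempty) (hcover : ∀ C ∈ c, IsCover E C) :
    IsCover E (⋂₀ c) := by
  obtain ⟨C₀, hC₀⟩ := hc₀
  have hsub : ⋂₀ c ⊆ E := (Set.sInter_subset_of_mem hC₀).trans (hcover C₀ hC₀).1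
  refine ⟨hsub, (Set.sUnion_subset_sUnion hsub).antisymm fun v hv => ?_⟩
  have hmeet : ∀ C ∈ c, (C ∩ {S ∈ E | v ∈ S}).Nonempty := by
    intro C hC
    obtain ⟨S, hSC, hvS⟩ := (hcover C hC).2.symm ▸ hv
    exact ⟨S, hSC, (hcover C hC).1 hSC, hvS⟩
  obtain ⟨S, hSc, -, hvS⟩ := hc.sInter_inter_nonempty ⟨C₀, hC₀⟩ (h v hv) hmeet
  exact ⟨S, hSc, hvS⟩

theorem stmt_9 {α : Type*} (E : Set (Set α))
    (h : ∀ v ∈ ⋃₀ E, {S ∈ E | v ∈ S}.Finite) :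
    ∃ C, IsMinimalCover E C := by
  obtain ⟨C, hC⟩ := zorn_superset {C | IsCover E C} fun c hcover hc => by
    rcases c.eq_empty_or_nonempty with rfl | hc₀
    · exact ⟨E, ⟨subset_rfl, rfl⟩, by simp⟩
    · exact ⟨⋂₀ c, isCover_sInter_of_isChain h hc hc₀ hcover,
        fun _ => Set.sInter_subset_of_mem⟩
  exact ⟨C, hC.prop, fun D hDC hD => hC.eq_of_subset hD hDC⟩
end

section
/- If a hypergraph E satisfies sup{|S| : S ∈ E} < ℵ₀, i.e., there is a uniform finite bound m on the cardinalities of all edges, then E has a minimal cover. -/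
lemma key_cover {α : Type*} : ∀ (m : ℕ) (E : Set (Set α)) (A : Set α),
    A ⊆ ⋃₀ E → (∀ S ∈ E, (S ∩ A).Finite ∧ (S ∩ A).ncard ≤ m) →
    ∃ C ⊆ E, A ⊆ ⋃₀ C ∧ ∀ S ∈ C, ∃ a, a ∈ A ∧ a ∈ S ∧ ∀ T ∈ C, T ≠ S → a ∉ T := by
  intro m
  induction m with
  | zero =>
    intro E A hA hcard
    have hAempty : A = ∅ := by
      by_contra hne
      obtain ⟨a, ha⟩ := Set.nonempty_iff_ne_empty.2 hne
      obtain ⟨S, hS, haS⟩ := hA ha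
      have h2 := hcard S hS
      have : (S ∩ A) = ∅ := by
        have := Set.ncard_eq_zero h2.1 |>.mp (Nat.le_zero.mp h2.2)
        exact this
      exact absurd (Set.mem_inter haS ha) (this ▸ Set.notMem_empty a)
    exact ⟨∅, Set.empty_subset _, by simp [hAempty], by simp⟩
  | succ m ih =>
    intro E A hA hcard
    -- Zorn: maximal family with pairwise disjoint nonempty traces on A
    set P : Set (Set (Set α)) := {D | D ⊆ E ∧ (∀ T ∈ D, (T ∩ A).Nonempty) ∧
      ∀ T₁ ∈ D, ∀ T₂ ∈ D, T₁ ≠ T₂ → (T₁ ∩ A) ∩ (T₂ ∩ A) = ∅} with hP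
    obtain ⟨D, hDmax⟩ : ∃ D, Maximal (· ∈ P) D := by
      apply zorn_subset
      intro c hcP hchain
      refine ⟨⋃₀ c, ⟨?_, ?_, ?_⟩, fun s hs => Set.subset_sUnion_of_mem hs⟩
      · exact fun S hS => by
          obtain ⟨D, hD, hSD⟩ := hS
          exact (hcP hD).1 hSD
      · rintro T ⟨D, hD, hTD⟩
        exact (hcP hD).2.1 T hTD
      · rintro T₁ ⟨D₁, hD₁, hT₁⟩ T₂ ⟨D₂, hD₂, hT₂⟩ hne
        rcases hchain.total hD₁ hD₂ with hsub | hsub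
        · exact (hcP hD₂).2.2 T₁ (hsub hT₁) T₂ hT₂ hne
        · exact (hcP hD₁).2.2 T₁ hT₁ T₂ (hsub hT₂) hne
    have hDE : D ⊆ E := hDmax.1.1
    have hDne : ∀ T ∈ D, (T ∩ A).Nonempty := hDmax.1.2.1
    have hDdisj : ∀ T₁ ∈ D, ∀ T₂ ∈ D, T₁ ≠ T₂ → (T₁ ∩ A) ∩ (T₂ ∩ A) = ∅ := hDmax.1.2.2
    set A' : Set α := A \ ⋃₀ D with hA'
    -- every edge meeting A' meets some trace
    have claim1 : ∀ S ∈ E, (S ∩ A').Nonempty → ∃ T ∈ D, ((S ∩ A) ∩ (T ∩ A)).Nonempty := by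
      intro S hS hSA'
      by_contra hno
      push_neg at hno
      have hSD : S ∉ D := by
        intro hSD
        obtain ⟨a, haS, haA'⟩ := hSA'
        exact haA'.2 ⟨S, hSD, haS⟩
      have : D ∪ {S} ∈ P := by
        refine ⟨Set.union_subset hDE (by simpa using hS), ?_, ?_⟩
        · rintro T (hT | hT)
          · exact hDne T hT
          · simp only [Set.mem_singleton_iff] at hT; subst hT
            obtain ⟨a, haS, haA, _⟩ := hSA'
            exact ⟨a, haS, haA⟩
        · rintro T₁ (hT₁ | hT₁) T₂ (hT₂ | hT₂) hne
          · exact hDdisj T₁ hT₁ T₂ hT₂ hne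
          · simp only [Set.mem_singleton_iff] at hT₂; subst hT₂
            have h1 := hno T₁ hT₁
            rw [Set.eq_empty_iff_forall_notMem] at h1 ⊢
            exact fun x hx => h1 x ⟨hx.2, hx.1⟩
          · simp only [Set.mem_singleton_iff] at hT₁; subst hT₁
            exact hno T₂ hT₂
          · simp only [Set.mem_singleton_iff] at hT₁ hT₂; subst hT₁; subst hT₂
            exact absurd rfl hne
      have heq := hDmax.2 this (Set.subset_union_left)
      exact hSD (heq (Set.mem_union_right _ rfl))
    -- trace bound decreased
    have claim2 : ∀ S ∈ E, (S ∩ A').Finite ∧ (S ∩ A').ncard ≤ m := by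
      intro S hS
      have hfin : (S ∩ A').Finite := (hcard S hS).1.subset (by
        intro x hx; exact ⟨hx.1, hx.2.1⟩)
      refine ⟨hfin, ?_⟩
      rcases Set.eq_empty_or_nonempty (S ∩ A') with he | hne
      · simp [he]
      obtain ⟨T, hT, a, haSA, haTA⟩ := claim1 S hS hne
      have hssub : (S ∩ A') ⊂ (S ∩ A) := by
        constructor
        · intro x hx; exact ⟨hx.1, hx.2.1⟩
        · intro hsub
          have : a ∈ S ∩ A' := hsub haSA
          exact this.2.2 ⟨T, hT, haTA.1⟩
      have := Set.ncard_lt_ncard hssub (hcard S hS).1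
      have h2 := (hcard S hS).2
      omega
    have hA'sub : A' ⊆ ⋃₀ E := fun a ha => hA ha.1
    obtain ⟨C', hC'E, hC'cov, hC'priv⟩ := ih E A' hA'sub claim2
    set D' : Set (Set α) := {T ∈ D | ¬ (T ∩ A ⊆ ⋃₀ C')} with hD'
    refine ⟨D' ∪ C', Set.union_subset (fun T hT => hDE hT.1) hC'E, ?_, ?_⟩
    · -- coverage
      intro a ha
      by_cases haA' : a ∈ A'
      · obtain ⟨S, hS, haS⟩ := hC'cov haA'
        exact ⟨S, Set.mem_union_right _ hS, haS⟩
      · have haD : a ∈ ⋃₀ D := by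
          by_contra h'
          exact haA' ⟨ha, h'⟩
        obtain ⟨T, hT, haT⟩ := haD
        by_cases hTcov : T ∩ A ⊆ ⋃₀ C'
        · obtain ⟨S, hS, haS⟩ := hTcov ⟨haT, ha⟩
          exact ⟨S, Set.mem_union_right _ hS, haS⟩
        · exact ⟨T, Set.mem_union_left _ ⟨hT, hTcov⟩, haT⟩
    · -- privacy
      intro S hS
      by_cases hSC' : S ∈ C'
      · obtain ⟨a, haA', haS, hpriv⟩ := hC'priv S hSC'
        refine ⟨a, haA'.1, haS, ?_⟩
        rintro T (hT | hT) hne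
        · exact fun haT => haA'.2 ⟨T, hT.1, haT⟩
        · exact hpriv T hT hne
      · rcases hS with hS | hS
        · obtain ⟨hSD, hSnc⟩ := hS
          rw [Set.not_subset] at hSnc
          obtain ⟨a, haSA, hanC'⟩ := hSnc
          refine ⟨a, haSA.2, haSA.1, ?_⟩
          rintro T (hT | hT) hne
          · intro haT
            have := hDdisj T hT.1 S hSD hne
            have h2 : a ∈ T ∩ A ∩ (S ∩ A) := ⟨⟨haT, haSA.2⟩, haSA⟩
            rw [this] at h2
            exact h2
          · intro haT
            exact hanC' ⟨T, hT, haT⟩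
        · exact absurd hS hSC'

theorem stmt_10 {α : Type*} (E : Set (Set α))
    (m : ℕ) (h : ∀ S ∈ E, S.Finite ∧ S.ncard ≤ m) :
    ∃ C, IsMinimalCover E C := by
  obtain ⟨C, hCE, hCcov, hCpriv⟩ := key_cover m E (⋃₀ E) subset_rfl (by
    intro S hS
    have := h S hS
    refine ⟨this.1.subset Set.inter_subset_left, le_trans ?_ this.2⟩
    exact Set.ncard_le_ncard Set.inter_subset_left this.1)
  have hCcov' : ⋃₀ C = ⋃₀ E :=
    le_antisymm (Set.sUnion_subset_sUnion hCE) hCcov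
  refine ⟨C, ⟨hCE, hCcov'⟩, ?_⟩
  rintro D hDC ⟨hDE, hDcov⟩
  apply Set.Subset.antisymm hDC
  intro S hS
  obtain ⟨a, haA, haS, hpriv⟩ := hCpriv S hS
  have : a ∈ ⋃₀ D := by rw [hDcov]; exact haA
  obtain ⟨T, hTD, haT⟩ := this
  by_cases hTS : T = S
  · exact hTS ▸ hTD
  · exact absurd haT (hpriv T (hDC hTD) hTS)
end

section
/- If every vertex of a hypergraph E lies in only finitely many edges, then any maximal subfamily M ⊆ E with the property that |M_v| < |E_v| for all vertices v (where F_v = {S ∈ F : v ∈ S}) yields a minimal cover C := E \ M of E. -/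
theorem stmt_11 {α : Type*} (E : Set (Set α))
    (hfin : ∀ v ∈ ⋃₀ E, {S ∈ E | v ∈ S}.Finite)
    (M : Set (Set α)) (hME : M ⊆ E)
    (hM : ∀ v ∈ ⋃₀ E, {S ∈ M | v ∈ S}.ncard < {S ∈ E | v ∈ S}.ncard)
    (hmax : ∀ M' ⊆ E, M ⊆ M' →
      (∀ v ∈ ⋃₀ E, {S ∈ M' | v ∈ S}.ncard < {S ∈ E | v ∈ S}.ncard) → M' = M) :
    IsMinimalCover E (E \ M) := by
  have hcov : IsCover E (E \ M) := by
    refine ⟨Set.diff_subset, ?_⟩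
    apply subset_antisymm (Set.sUnion_subset_sUnion Set.diff_subset)
    intro v hv
    have hlt := hM v hv
    have hsub : {S ∈ M | v ∈ S} ⊆ {S ∈ E | v ∈ S} := fun S hS => ⟨hME hS.1, hS.2⟩
    have hne : {S ∈ M | v ∈ S} ≠ {S ∈ E | v ∈ S} := fun h => by simp [h] at hlt
    obtain ⟨S, hSE, hSM⟩ := Set.exists_of_ssubset (hsub.ssubset_of_ne hne)
    exact ⟨S, ⟨hSE.1, fun hSM' => hSM ⟨hSM', hSE.2⟩⟩, hSE.2⟩
  refine ⟨hcov, fun D hD hDc => ?_⟩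
  by_contra hne
  obtain ⟨S₀, hS₀, hS₀D⟩ := Set.exists_of_ssubset (hD.ssubset_of_ne hne)
  have key : ∀ v ∈ ⋃₀ E, {S ∈ M ∪ {S₀} | v ∈ S}.ncard < {S ∈ E | v ∈ S}.ncard := by
    intro v hv
    have hv' : v ∈ ⋃₀ D := hDc.2.symm ▸ hv
    obtain ⟨T, hTD, hvT⟩ := hv'
    have hTEM : T ∈ E \ M := hD hTD
    have hsub : {S ∈ M ∪ {S₀} | v ∈ S} ⊆ {S ∈ E | v ∈ S} := by
      rintro S ⟨hS | rfl, hvS⟩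
      · exact ⟨hME hS, hvS⟩
      · exact ⟨hS₀.1, hvS⟩
    have hT : T ∉ {S ∈ M ∪ {S₀} | v ∈ S} := by
      rintro ⟨hS | hS, -⟩
      · exact hTEM.2 hS
      · exact hS₀D (hS ▸ hTD)
    exact Set.ncard_lt_ncard ⟨hsub, fun h => hT (h ⟨hTEM.1, hvT⟩)⟩ (hfin v hv)
  have heq := hmax (M ∪ {S₀}) (Set.union_subset hME (by simpa using hS₀.1))
    Set.subset_union_left key
  exact hS₀.2 (heq ▸ (Set.mem_union_right M rfl : S₀ ∈ M ∪ {S₀}))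
end

section
/- If a countable hypergraph E contains no subfamily {E_n}_{n∈ℕ} and infinite set Ω ⊆ ⋃E with a bijection f : ℕ → Ω satisfying f⁻¹(E_n ∩ Ω) = {0,…,n−1} for all n (i.e., no subhypergraph isomorphic to ω), then every non-empty subfamily of E restricted to any subset of vertices has a maximal edge. -/
theorem stmt_15 {α : Type*} (E : Set (Set α))
    (hEc : E.Countable) (hVc : (⋃₀ E).Countable)
    (h : ¬ ∃ Eseq : ℕ → Set α, (∀ n, Eseq n ∈ E) ∧
      ∃ f : ℕ → α, Function.Injective f ∧ Set.range f ⊆ ⋃₀ E ∧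
        ∀ n, f ⁻¹' (Eseq n ∩ Set.range f) = Set.Iio n) :
    ∀ F ⊆ E, ∀ A : Set α, ((fun T => T ∩ A) '' F).Nonempty →
      HasMaximalEdge ((fun T => T ∩ A) '' F) := by
  intro F hF A hne
  by_contra hmax
  apply h
  set S := (fun T => T ∩ A) '' F with hS
  have step : ∀ C : {C // C ∈ S}, ∃ C' : {C // C ∈ S}, (C : Set α) ⊂ C' := by
    rintro ⟨C, hC⟩
    unfold HasMaximalEdge at hmax
    push_neg at hmax
    obtain ⟨T, hT, hsub, hne'⟩ := hmax C hC
    exact ⟨⟨T, hT⟩, ssubset_of_subset_of_ne hsub (Ne.symm hne')⟩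
  choose g hg using step
  obtain ⟨C0, hC0⟩ := hne
  let c : ℕ → {C // C ∈ S} := fun n => g^[n] ⟨C0, hC0⟩
  have hstep : ∀ n, (c n : Set α) ⊂ c (n + 1) := by
    intro n
    have : c (n + 1) = g (c n) := Function.iterate_succ_apply' g n _
    rw [this]; exact hg (c n)
  have hmono : ∀ {j n : ℕ}, j ≤ n → (c j : Set α) ⊆ c n := by
    intro j n hjn
    induction n with
    | zero => simp_all
    | succ n ih =>
      rcases Nat.lt_succ_iff_lt_or_eq.mp (Nat.lt_succ_of_le hjn) with h1 | h1
      · exact (ih (Nat.lt_succ_iff.mp h1)).trans (hstep n).subset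
      · subst h1; rfl
  -- choose original edges
  have hmem : ∀ n, ∃ T ∈ F, T ∩ A = (c n : Set α) := fun n => (c n).2
  choose T hTF hTA using hmem
  -- choose points
  have hpt : ∀ n, ∃ x, x ∈ (c (n + 1) : Set α) ∧ x ∉ (c n : Set α) := by
    intro n
    obtain ⟨x, hx1, hx2⟩ := Set.exists_of_ssubset (hstep n)
    exact ⟨x, hx1, hx2⟩
  choose x hx1 hx2 using hpt
  have hxA : ∀ n, x n ∈ A := by
    intro n
    have := hx1 n
    rw [← hTA (n + 1)] at this
    exact this.2
  have hxin : ∀ {k n : ℕ}, x k ∈ (c n : Set α) ↔ k < n := by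
    intro k n
    constructor
    · intro hk
      by_contra hkn
      exact hx2 k (hmono (Nat.le_of_not_lt hkn) hk)
    · intro hk; exact hmono hk (hx1 k)
  have hinj : Function.Injective x := by
    intro j k hjk
    by_contra hne'
    rcases Nat.lt_or_ge j k with h1 | h1
    · exact hx2 k (hjk ▸ hxin.mpr h1)
    · exact hx2 j (hjk ▸ hxin.mpr (lt_of_le_of_ne h1 (Ne.symm hne')))
  refine ⟨T, fun n => hF (hTF n), x, hinj, ?_, ?_⟩
  · rintro _ ⟨k, rfl⟩
    have := hx1 k
    rw [← hTA (k + 1)] at this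
    exact ⟨T (k + 1), hF (hTF (k + 1)), this.1⟩
  · intro n
    ext k
    simp only [Set.mem_preimage, Set.mem_inter_iff, Set.mem_range, Set.mem_Iio]
    constructor
    · rintro ⟨hk, -⟩
      have : x k ∈ (c n : Set α) := by
        rw [← hTA n]; exact ⟨hk, hxA k⟩
      exact hxin.mp this
    · intro hk
      have : x k ∈ (c n : Set α) := hxin.mpr hk
      rw [← hTA n] at this
      exact ⟨this.1, k, rfl⟩
end

section
/- Let E be a hypergraph in which every edge has exactly 2 elements and each vertex has finite degree (belongs to finitely many edges). Then E has a minimal cover. -/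
open Set

theorem IsChain.sInter_inter_nonempty_of_finite {β : Type*} {c : Set (Set β)} {F : Set β}
    (hc : IsChain (· ⊆ ·) c) (hF : F.Finite) (hne : c.Nonempty)
    (h : ∀ C ∈ c, (C ∩ F).Nonempty) : (⋂₀ c ∩ F).Nonempty := by
  obtain ⟨C₀, hC₀, hmin⟩ := Finite.exists_minimalFor' (· ∩ F) c
    (hF.finite_subsets.subset (image_subset_iff.2 fun _ _ => inter_subset_right)) hne
  have hC₀_least : C₀ ∩ F ⊆ ⋂₀ c := fun x hx C hC => by
    rcases hc.total hC₀ hC with hle | hle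
    · exact hle hx.1
    · exact (hmin hC (inter_subset_inter_left F hle) hx).1
  obtain ⟨x, hx⟩ := h C₀ hC₀
  exact ⟨x, hC₀_least hx, hx.2⟩

theorem IsCover.sInter_of_isChain {α : Type*} {E : Set (Set α)} {c : Set (Set (Set α))}
    (hfin : ∀ v ∈ ⋃₀ E, {S ∈ E | v ∈ S}.Finite) (hc : IsChain (· ⊆ ·) c) (hne : c.Nonempty)
    (hcov : ∀ C ∈ c, IsCover E C) : IsCover E (⋂₀ c) := by
  obtain ⟨C₀, hC₀⟩ := hne
  have hsub : ⋂₀ c ⊆ E := (sInter_subset_of_mem hC₀).trans (hcov C₀ hC₀).1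
  refine ⟨hsub, (sUnion_subset_sUnion hsub).antisymm fun v hv => ?_⟩
  have htrace : ∀ C ∈ c, (C ∩ {S ∈ E | v ∈ S}).Nonempty := fun C hC => by
    obtain ⟨S, hSC, hvS⟩ := ((hcov C hC).2 ▸ hv : v ∈ ⋃₀ C)
    exact ⟨S, hSC, (hcov C hC).1 hSC, hvS⟩
  obtain ⟨S, hS, -, hvS⟩ := hc.sInter_inter_nonempty_of_finite (hfin v hv) ⟨C₀, hC₀⟩ htrace
  exact ⟨S, hS, hvS⟩

theorem stmt_16_general {α : Type*} (E : Set (Set α))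
    (hfin : ∀ v ∈ ⋃₀ E, {S ∈ E | v ∈ S}.Finite) :
    ∃ C, IsMinimalCover E C := by
  obtain ⟨C, hC⟩ := zorn_superset {C | IsCover E C} fun c hcov hc => by
    rcases c.eq_empty_or_nonempty with rfl | hne
    · exact ⟨E, ⟨subset_rfl, rfl⟩, by simp⟩
    exact ⟨⋂₀ c, IsCover.sInter_of_isChain hfin hc hne hcov, fun _ => sInter_subset_of_mem⟩
  exact ⟨C, hC.prop, fun D hDC hD => hDC.antisymm (hC.le_of_le hD hDC)⟩

theorem stmt_16 {α : Type*} (E : Set (Set α))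
    (h2 : ∀ S ∈ E, S.ncard = 2)
    (hfin : ∀ v ∈ ⋃₀ E, {S ∈ E | v ∈ S}.Finite) :
    ∃ C, IsMinimalCover E C :=
  stmt_16_general E hfin
end

section
/- If C' is a minimal cover of the hypergraph E' := {S \ W : S ∈ E} (for W = ⋃D with D ⊆ E a maximal disjoint subfamily), C̃ ⊆ E is obtained by choosing for each C ∈ C' an edge C̃ ∈ E with C = C̃ \ W, and D̃ := {D₀ ∈ D : D₀ ⊄ ⋃C̃}, then C̃ ∪ D̃ is a minimal cover of E. -/
theorem stmt_19 {α : Type*} (E : Set (Set α))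
    (D : Set (Set α)) (hDE : D ⊆ E)
    (hdisj : D.Pairwise fun S T => Disjoint S T)
    (hmax : ∀ D' ⊆ E, D ⊆ D' → (D'.Pairwise fun S T => Disjoint S T) → D' = D)
    (C' : Set (Set α))
    (hC' : IsMinimalCover ((fun S => S \ ⋃₀ D) '' E) C')
    (g : Set α → Set α)
    (hg : ∀ C ∈ C', g C ∈ E ∧ g C \ ⋃₀ D = C) :
    IsMinimalCover E (g '' C' ∪ {D₀ ∈ D | ¬ D₀ ⊆ ⋃₀ (g '' C')}) := by
  obtain ⟨⟨hC'sub, hC'cov⟩, hC'min⟩ := hC'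
  set W := ⋃₀ D with hW
  set Ct := g '' C' with hCt
  set Dt := {D₀ ∈ D | ¬ D₀ ⊆ ⋃₀ Ct} with hDt
  have hsubE : Ct ∪ Dt ⊆ E := by
    rintro T (⟨C, hC, rfl⟩ | ⟨hTD, _⟩)
    · exact (hg C hC).1
    · exact hDE hTD
  have hcov : ⋃₀ (Ct ∪ Dt) = ⋃₀ E := by
    apply subset_antisymm (Set.sUnion_subset_sUnion hsubE)
    rintro x ⟨S, hS, hx⟩
    by_cases hxW : x ∈ W
    · obtain ⟨D₀, hD₀, hxD₀⟩ := hxW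
      by_cases h : D₀ ⊆ ⋃₀ Ct
      · obtain ⟨T, hT, hxT⟩ := h hxD₀
        exact ⟨T, Or.inl hT, hxT⟩
      · exact ⟨D₀, Or.inr ⟨hD₀, h⟩, hxD₀⟩
    · have hx' : x ∈ ⋃₀ C' := by
        rw [hC'cov]
        exact ⟨S \ W, ⟨S, hS, rfl⟩, hx, hxW⟩
      obtain ⟨C, hC, hxC⟩ := hx'
      refine ⟨g C, Or.inl ⟨C, hC, rfl⟩, ?_⟩
      rw [← (hg C hC).2] at hxC
      exact hxC.1
  refine ⟨⟨hsubE, hcov⟩, ?_⟩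
  intro B hB hBcov
  apply subset_antisymm hB
  have hDtB : Dt ⊆ B := by
    rintro D₀ ⟨hD₀, hns⟩
    obtain ⟨x, hxD₀, hxn⟩ := Set.not_subset.1 hns
    have hx : x ∈ ⋃₀ B := by
      rw [hBcov.2]
      exact ⟨D₀, hDE hD₀, hxD₀⟩
    obtain ⟨T, hT, hxT⟩ := hx
    rcases hB hT with hTC | ⟨hTD, _⟩
    · exact absurd ⟨T, hTC, hxT⟩ hxn
    · rcases eq_or_ne T D₀ with rfl | hne
      · exact hT
      · exact (Set.disjoint_left.1 (hdisj hTD hD₀ hne) hxT hxD₀).elim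
  have hA : {C ∈ C' | g C ∈ B} = C' := by
    apply hC'min _ (Set.sep_subset _ _)
    constructor
    · exact fun C hC => hC'sub hC.1
    · apply subset_antisymm
      · exact Set.sUnion_subset_sUnion fun C hC => hC'sub hC.1
      · rintro x ⟨S', ⟨S, hS, rfl⟩, hxS, hxW⟩
        have hx : x ∈ ⋃₀ B := by rw [hBcov.2]; exact ⟨S, hS, hxS⟩
        obtain ⟨T, hT, hxT⟩ := hx
        rcases hB hT with ⟨C, hC, rfl⟩ | ⟨hTD, _⟩
        · refine ⟨C, ⟨hC, hT⟩, ?_⟩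
          rw [← (hg C hC).2]
          exact ⟨hxT, hxW⟩
        · exact absurd ⟨T, hTD, hxT⟩ hxW
  rintro T (⟨C, hC, rfl⟩ | hTD)
  · rw [← hA] at hC
    exact hC.2
  · exact hDtB hTD
end
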